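/- arXiv:1107.4392 — 7 statements merged into one kernel-verified Lean document; each statement's English description precedes it below -/
import Mathlib

section
/- Let A be a nonempty multiset of nonzero elements of Z_p (p prime). Then the set of all subset sums of A (including the empty sum 0) has at least min(p, |A| + 1) distinct elements, where |A| counts elements with multiplicity. -/
def sumset {G : Type*} [AddCommMonoid G] (A : Multiset G) : Set G :=
  {x | ∃ B ≤ A, B.sum = x}

lemma sumset_cons {G : Type*} [AddCommMonoid G] [DecidableEq G] (a : G) (A : Multiset G) :
    sumset (a ::ₘ A) = sumset A ∪ (a + ·) '' sumset A := by
  ext x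
  constructor
  · rintro ⟨B, hB, rfl⟩
    by_cases h : a ∈ B
    · right
      refine ⟨(B.erase a).sum, ⟨B.erase a, ?_, rfl⟩, ?_⟩
      · exact Multiset.erase_le_iff_le_cons.2 hB
      · show a + _ = _; rw [← Multiset.sum_cons, Multiset.cons_erase h]
    · exact Or.inl ⟨B, (Multiset.le_cons_of_notMem h).1 hB, rfl⟩
  · rintro (⟨B, hB, rfl⟩ | ⟨y, ⟨B, hB, rfl⟩, rfl⟩)
    · exact ⟨B, hB.trans (Multiset.le_cons_self _ _), rfl⟩
    · exact ⟨a ::ₘ B, Multiset.cons_le_cons _ hB, by simp⟩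

lemma zero_mem_sumset {G : Type*} [AddCommMonoid G] (A : Multiset G) : (0 : G) ∈ sumset A :=
  ⟨0, Multiset.zero_le _, rfl⟩

lemma closed_univ (p : ℕ) [Fact p.Prime] (a : ZMod p) (ha : a ≠ 0) (S : Set (ZMod p))
    (hS : S.Nonempty) (hcl : ∀ s ∈ S, a + s ∈ S) : S = Set.univ := by
  obtain ⟨s₀, hs₀⟩ := hS
  have key : ∀ n : ℕ, (n : ZMod p) * a + s₀ ∈ S := by
    intro n
    induction n with
    | zero => simpa using hs₀
    | succ n ih =>
      push_cast
      have := hcl _ ih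
      convert this using 1
      ring
  apply Set.eq_univ_of_forall
  intro x
  have : x = (((x - s₀) * a⁻¹).val : ZMod p) * a + s₀ := by
    rw [ZMod.natCast_val, ZMod.cast_id, mul_assoc, inv_mul_cancel₀ ha]
    ring
  rw [this]
  exact key _

lemma step (p : ℕ) [Fact p.Prime] (a : ZMod p) (ha : a ≠ 0) (S : Set (ZMod p))
    (hS : S.Nonempty) : min p (S.ncard + 1) ≤ (S ∪ (a + ·) '' S).ncard := by
  have hfin : S.Finite := Set.toFinite S
  by_cases h : (a + ·) '' S ⊆ S
  · have him : ((a + ·) '' S).ncard = S.ncard :=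
      Set.ncard_image_of_injective _ (add_right_injective a)
    have heq : (a + ·) '' S = S := Set.eq_of_subset_of_ncard_le h him.ge hfin
    have hcl : ∀ s ∈ S, a + s ∈ S := fun s hs => heq ▸ ⟨s, hs, rfl⟩
    have : S = Set.univ := closed_univ p a ha S hS hcl
    rw [this]
    simp only [Set.univ_union]
    rw [Set.ncard_univ]
    simp [ZMod.card p]
  · obtain ⟨x, hx, hxS⟩ := Set.not_subset.1 h
    calc min p (S.ncard + 1) ≤ S.ncard + 1 := min_le_right _ _
      _ = (insert x S).ncard := (Set.ncard_insert_of_notMem hxS hfin).symm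
      _ ≤ _ := Set.ncard_le_ncard (Set.insert_subset (Or.inr hx) Set.subset_union_left)
          (Set.toFinite _)

theorem stmt_0 (p : ℕ) (hp : p.Prime) (A : Multiset (ZMod p)) (hA : A ≠ 0)
    (h0 : ∀ x ∈ A, x ≠ 0) :
    (sumset A).ncard ≥ min p (Multiset.card A + 1) := by
  haveI : Fact p.Prime := ⟨hp⟩
  induction A using Multiset.induction with
  | empty => exact absurd rfl hA
  | cons a A ih =>
    have ha : a ≠ 0 := h0 a (Multiset.mem_cons_self _ _)
    by_cases hA0 : A = 0
    · subst hA0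
      rw [sumset_cons]
      have : sumset (0 : Multiset (ZMod p)) = {0} := by
        ext x; simp [sumset, Multiset.le_zero]
      rw [this]
      have : ({0} : Set (ZMod p)) ∪ (a + ·) '' {0} = {0, a} := by
        simp [Set.image_singleton, Set.union_comm, Set.pair_comm]
      rw [this, Set.ncard_pair ha.symm]
      simp
    · have hS := ih hA0 (fun x hx => h0 x (Multiset.mem_cons_of_mem hx))
      have hne : (sumset A).Nonempty := ⟨0, zero_mem_sumset A⟩
      rw [sumset_cons]
      have hstep := step p a ha (sumset A) hne
      refine le_trans ?_ hstep
      simp only [Multiset.card_cons]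
      omega
end

section
/- Let H and K be subgroups of a finite abelian group G with H ∩ K = {0}. Let D and E be multisets contained in H and K respectively. Then #Σ(D ∪ E) = #ΣD · #ΣE. -/
/-! Since `H ∩ K = 0`, addition `H × K → G` is injective, and `Σ(D ∪ E) = ΣD + ΣE` because a
submultiset of `D ∪ E` splits into a submultiset of `D` and one of `E`. Hence
`(x, y) ↦ x + y` is a bijection `ΣD × ΣE → Σ(D ∪ E)`. -/

open Pointwise

theorem Multiset.exists_le_le_eq_add_of_le_add {α : Type*} [DecidableEq α]
    {B D E : Multiset α} (h : B ≤ D + E) : ∃ B₁ ≤ D, ∃ B₂ ≤ E, B = B₁ + B₂ := by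
  refine ⟨B ∩ D, Multiset.inter_le_right, B - D, tsub_le_iff_left.2 h, ?_⟩
  ext a
  simp only [Multiset.count_add, Multiset.count_inter, Multiset.count_sub]
  omega

theorem AddSubgroup.add_injOn_prod {G : Type*} [AddGroup G] {H K : AddSubgroup G}
    (h : Disjoint H K) : ((H : Set G) ×ˢ (K : Set G)).InjOn fun p => p.1 + p.2 := by
  rintro ⟨x, y⟩ ⟨hx, hy⟩ ⟨x', y'⟩ ⟨hx', hy'⟩ hxy
  have := AddSubgroup.add_injective_of_disjoint h
    (a₁ := (⟨x, hx⟩, ⟨y, hy⟩)) (a₂ := (⟨x', hx'⟩, ⟨y', hy'⟩)) hxy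
  simpa [Prod.ext_iff] using this

theorem Set.ncard_add_of_subset_of_disjoint {G : Type*} [AddGroup G] {H K : AddSubgroup G}
    (hHK : Disjoint H K) {s t : Set G} (hs : s ⊆ H) (ht : t ⊆ K) :
    (s + t).ncard = s.ncard * t.ncard := by
  have hinj := (AddSubgroup.add_injOn_prod hHK).mono (Set.prod_mono hs ht)
  rw [← Set.add_image_prod, hinj.ncard_image, Set.ncard_prod]

section Sumset

variable {G : Type*} [AddCommMonoid G]

theorem sumset_add [DecidableEq G] (D E : Multiset G) : sumset (D + E) = sumset D + sumset E := by
  ext x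
  constructor
  · rintro ⟨B, hB, rfl⟩
    obtain ⟨B₁, hB₁, B₂, hB₂, rfl⟩ := Multiset.exists_le_le_eq_add_of_le_add hB
    exact ⟨B₁.sum, ⟨B₁, hB₁, rfl⟩, B₂.sum, ⟨B₂, hB₂, rfl⟩, (Multiset.sum_add _ _).symm⟩
  · rintro ⟨_, ⟨B₁, hB₁, rfl⟩, _, ⟨B₂, hB₂, rfl⟩, rfl⟩
    exact ⟨B₁ + B₂, add_le_add hB₁ hB₂, Multiset.sum_add _ _⟩

theorem sumset_subset_addSubmonoid {S : AddSubmonoid G} {D : Multiset G} (hD : ∀ x ∈ D, x ∈ S) :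
    sumset D ⊆ S := by
  rintro _ ⟨B, hB, rfl⟩
  exact S.multiset_sum_mem B fun x hx => hD x (Multiset.mem_of_le hB hx)

end Sumset

theorem stmt_5_general {G : Type*} [AddCommGroup G]
    (H K : AddSubgroup G) (hinf : H ⊓ K = ⊥)
    (D E : Multiset G) (hD : ∀ x ∈ D, x ∈ H) (hE : ∀ x ∈ E, x ∈ K) :
    (sumset (D + E)).ncard = (sumset D).ncard * (sumset E).ncard := by
  classical
  rw [sumset_add]
  exact Set.ncard_add_of_subset_of_disjoint (disjoint_iff.2 hinf)
    (sumset_subset_addSubmonoid (S := H.toAddSubmonoid) hD)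
    (sumset_subset_addSubmonoid (S := K.toAddSubmonoid) hE)

theorem stmt_5 {G : Type*} [AddCommGroup G] [Fintype G]
    (H K : AddSubgroup G) (hinf : H ⊓ K = ⊥)
    (D E : Multiset G) (hD : ∀ x ∈ D, x ∈ H) (hE : ∀ x ∈ E, x ∈ K) :
    (sumset (D + E)).ncard = (sumset D).ncard * (sumset E).ncard :=
  stmt_5_general H K hinf D E hD hE
end

section
/- Let G = H ⊕ K be an internal direct sum of finite abelian groups, and let C be a multiset in G. Let D = C ∩ H (the submultiset of elements lying in H), F = C \ D, and E = π_K(F). Then #ΣC ≥ #ΣD · #ΣE. -/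
lemma exists_of_le_map {α β : Type*} [DecidableEq β] {f : α → β} {s : Multiset α}
    {B' : Multiset β} (h : B' ≤ s.map f) : ∃ B ≤ s, B.map f = B' := by
  induction s using Multiset.induction generalizing B' with
  | empty =>
    simp only [Multiset.map_zero, Multiset.le_zero] at h
    exact ⟨0, le_refl _, by simp [h]⟩
  | cons a t ih =>
    rw [Multiset.map_cons] at h
    by_cases hm : f a ∈ B'
    · have h' : B'.erase (f a) ≤ t.map f := (Multiset.erase_le_iff_le_cons).2 h
      obtain ⟨B, hB, hBm⟩ := ih h'
      exact ⟨a ::ₘ B, Multiset.cons_le_cons _ hB, by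
        rw [Multiset.map_cons, hBm, Multiset.cons_erase hm]⟩
    · obtain ⟨B, hB, hBm⟩ := ih ((Multiset.le_cons_of_notMem hm).1 h)
      exact ⟨B, hB.trans (Multiset.le_cons_self _ _), hBm⟩

open scoped Classical in
theorem stmt_7 {G : Type*} [AddCommGroup G] [Fintype G]
    (H K : AddSubgroup G) (hinf : H ⊓ K = ⊥) (hsup : H ⊔ K = ⊤)
    (πK : G →+ G) (hπK : ∀ g, πK g ∈ K) (hπKid : ∀ g ∈ K, πK g = g)
    (hker : ∀ g ∈ H, πK g = 0)
    (C D F E : Multiset G)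
    (hD : D = C.filter (fun x => x ∈ H))
    (hF : F = C - D)
    (hE : E = F.map πK) :
    (sumset C).ncard ≥ (sumset D).ncard * (sumset E).ncard := by
  -- representative function: for e ∈ sumset E, pick B ≤ F with (B.map πK).sum = e
  have hDC : D ≤ C := hD ▸ Multiset.filter_le _ _
  have rep : ∀ e ∈ sumset E, ∃ b, (∃ B ≤ F, B.sum = b) ∧ πK b = e := by
    intro e he
    obtain ⟨B', hB', hs⟩ := he
    rw [hE] at hB'
    obtain ⟨B, hBF, hBm⟩ := exists_of_le_map hB'
    refine ⟨B.sum, ⟨B, hBF, rfl⟩, ?_⟩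
    rw [map_multiset_sum, hBm, hs]
  choose! r hr1 hr2 using rep
  -- d ∈ sumset D implies d ∈ H hence πK d = 0
  have hDH : ∀ d ∈ sumset D, πK d = 0 := by
    intro d hd
    obtain ⟨B, hB, hs⟩ := hd
    apply hker
    rw [← hs]
    exact AddSubgroup.multiset_sum_mem _ _ (fun x hx => by
      have := Multiset.mem_of_le hB hx
      rw [hD, Multiset.mem_filter] at this
      exact this.2)
  set f : G × G → G := fun p => p.1 + r p.2 with hf
  have hmaps : ∀ p ∈ (sumset D) ×ˢ (sumset E), f p ∈ sumset C := by
    rintro ⟨d, e⟩ ⟨hd, he⟩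
    obtain ⟨Bd, hBd, hsd⟩ := hd
    obtain ⟨Bf, hBf, hsf⟩ := (hr1 e he)
    refine ⟨Bd + Bf, ?_, by simp [hf, hsd, hsf]⟩
    calc Bd + Bf ≤ D + (C - D) := add_le_add hBd (hF ▸ hBf)
    _ = C := by rw [add_comm, tsub_add_cancel_of_le hDC]
  have hinj : Set.InjOn f ((sumset D) ×ˢ (sumset E)) := by
    rintro ⟨d, e⟩ ⟨hd, he⟩ ⟨d', e'⟩ ⟨hd', he'⟩ heq
    simp only [hf] at heq
    have hee : e = e' := by
      have := congrArg πK heq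
      simpa [map_add, hDH d hd, hDH d' hd', hr2 e he, hr2 e' he'] using this
    subst hee
    have : d = d' := by
      have := add_right_cancel heq
      exact this ▸ rfl
    simp [this]
  calc (sumset D).ncard * (sumset E).ncard = ((sumset D) ×ˢ (sumset E)).ncard := by
        rw [Set.ncard_eq_toFinset_card', Set.ncard_eq_toFinset_card',
          Set.ncard_eq_toFinset_card']
        rw [← Finset.card_product]
        congr 1
        ext ⟨a, b⟩
        simp
  _ ≤ (sumset C).ncard :=
      Set.ncard_le_ncard_of_injOn f hmaps hinj (Set.toFinite _)
end

section
/- Let p be a prime and let A be a valid multiset contained in (Z/pZ)^2 with |A| = p. Then #ΣA ≥ 2p. -/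
open scoped Classical in
/-- The number of elements of the multiset A (with multiplicity) lying in the subgroup H. -/
noncomputable def inCount {G : Type*} [AddCommGroup G] (A : Multiset G) (H : AddSubgroup G) : ℕ :=
  Multiset.card (A.filter (fun x => x ∈ H))

/-- A multiset in (Z/pZ)² is valid if 0 ∉ A and every nontrivial (cyclic) subgroup contains
fewer than p elements of A, counted with multiplicity. -/
def ValidMS (p : ℕ) (A : Multiset (ZMod p × ZMod p)) : Prop :=
  (0 : ZMod p × ZMod p) ∉ A ∧
    ∀ x : ZMod p × ZMod p, x ≠ 0 → inCount A (AddSubgroup.zmultiples x) < p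

section Fsums
variable {G : Type*} [AddCommMonoid G] [DecidableEq G]

/-- Finset of all submultiset sums. -/
def Fsum (A : Multiset G) : Finset G := (A.powerset.map Multiset.sum).toFinset

lemma mem_Fsum {A : Multiset G} {x : G} : x ∈ Fsum A ↔ ∃ B ≤ A, B.sum = x := by
  simp [Fsum, Multiset.mem_powerset, eq_comm]

lemma zero_mem_Fsum (A : Multiset G) : (0 : G) ∈ Fsum A :=
  mem_Fsum.2 ⟨0, A.zero_le, rfl⟩

lemma Fsum_zero : Fsum (0 : Multiset G) = {0} := by
  ext x; simp [mem_Fsum, eq_comm]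

lemma Fsum_cons (x : G) (A : Multiset G) :
    Fsum (x ::ₘ A) = Fsum A ∪ (Fsum A).image (x + ·) := by
  ext y
  simp only [Finset.mem_union, Finset.mem_image, mem_Fsum]
  constructor
  · rintro ⟨B, hB, rfl⟩
    by_cases hxB : x ∈ B
    · refine Or.inr ⟨(B.erase x).sum, ⟨B.erase x, Multiset.erase_le_iff_le_cons.2 hB, rfl⟩, ?_⟩
      rw [← Multiset.sum_cons, Multiset.cons_erase hxB]
    · exact Or.inl ⟨B, (Multiset.le_cons_of_notMem hxB).1 hB, rfl⟩
  · rintro (⟨B, hB, rfl⟩ | ⟨z, ⟨B, hB, rfl⟩, rfl⟩)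
    · exact ⟨B, hB.trans (Multiset.le_cons_self _ _), rfl⟩
    · exact ⟨x ::ₘ B, Multiset.cons_le_cons _ hB, by simp⟩

lemma add_mem_Fsum_add {A B : Multiset G} {s t : G} (hs : s ∈ Fsum A) (ht : t ∈ Fsum B) :
    s + t ∈ Fsum (A + B) := by
  rcases mem_Fsum.1 hs with ⟨C, hC, rfl⟩
  rcases mem_Fsum.1 ht with ⟨D, hD, rfl⟩
  exact mem_Fsum.2 ⟨C + D, add_le_add hC hD, by simp⟩

lemma Fsum_map {H : Type*} [AddCommMonoid H] [DecidableEq H] (f : G →+ H) (A : Multiset G) :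
    Fsum (A.map f) = (Fsum A).image f := by
  induction A using Multiset.induction with
  | empty => simp [Fsum_zero]
  | cons x A ih =>
      rw [Multiset.map_cons, Fsum_cons, Fsum_cons, ih, Finset.image_union,
        Finset.image_image, Finset.image_image]
      congr 1
      ext y
      simp [Function.comp, map_add]

lemma Fsum_subset_addSubgroup {G' : Type*} [AddCommGroup G'] [DecidableEq G']
    {A : Multiset G'} {H : AddSubgroup G'} (h : ∀ x ∈ A, x ∈ H) {s : G'}
    (hs : s ∈ Fsum A) : s ∈ H := by
  rcases mem_Fsum.1 hs with ⟨B, hB, rfl⟩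
  exact multiset_sum_mem B fun x hx => h x (Multiset.mem_of_le hB hx)

end Fsums

section OneD
variable {p : ℕ} [Fact p.Prime]

lemma Fsum_card_min (c : Multiset (ZMod p)) (hc : ∀ x ∈ c, x ≠ 0) :
    min p (Multiset.card c + 1) ≤ (Fsum c).card := by
  induction c using Multiset.induction with
  | empty => simpa [Fsum_zero] using (Fact.out : p.Prime).one_lt.le
  | cons x c ih =>
      have hx : x ≠ 0 := hc x (Multiset.mem_cons_self _ _)
      have ih' := ih fun y hy => hc y (Multiset.mem_cons_of_mem hy)
      set S := Fsum c with hS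
      by_cases hbig : p ≤ S.card
      · calc min p (Multiset.card (x ::ₘ c) + 1) ≤ p := min_le_left _ _
          _ ≤ S.card := hbig
          _ ≤ (Fsum (x ::ₘ c)).card := by
              rw [Fsum_cons]; exact Finset.card_le_card Finset.subset_union_left
      push_neg at hbig
      -- S is not everything, so adding translate grows
      have hgrow : S.card + 1 ≤ (Fsum (x ::ₘ c)).card := by
        rw [Fsum_cons, ← hS]
        by_contra hle
        push_neg at hle
        have hsub : S ⊆ S ∪ S.image (x + ·) := Finset.subset_union_left
        have hcard : (S ∪ S.image (x + ·)).card = S.card := by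
          have := Finset.card_le_card hsub
          omega
        have hEq : S ∪ S.image (x + ·) = S :=
          (Finset.eq_of_subset_of_card_le hsub hcard.le).symm
        have hclosed : ∀ s ∈ S, x + s ∈ S := by
          intro s hs
          have : x + s ∈ S ∪ S.image (x + ·) :=
            Finset.mem_union_right _ (Finset.mem_image_of_mem _ hs)
          rwa [hEq] at this
        have hn : ∀ n : ℕ, ∀ s ∈ S, n • x + s ∈ S := by
          intro n
          induction n with
          | zero => simpa using fun s hs => hs
          | succ n ihn =>
              intro s hs
              have h2 := hclosed _ (ihn s hs)
              rw [succ_nsmul, show n • x + x + s = x + (n • x + s) by abel]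
              exact h2
        -- every g is n • x
        have hall : ∀ g : ZMod p, g ∈ S := by
          intro g
          have h0 : (0 : ZMod p) ∈ S := zero_mem_Fsum c
          have : ((g * x⁻¹).val • x : ZMod p) = g := by
            rw [nsmul_eq_mul, ZMod.natCast_val, ZMod.cast_id]
            field_simp
          have := hn (g * x⁻¹).val 0 h0
          rwa [add_zero, ‹((g * x⁻¹).val • x : ZMod p) = g›] at this
        have : S = Finset.univ := Finset.eq_univ_iff_forall.2 hall
        rw [this, Finset.card_univ, ZMod.card] at hbig
        omega
      simp only [Multiset.card_cons]
      omega

end OneD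

section TwoD
variable {p : ℕ} [Fact p.Prime]

lemma mem_zmultiples_iff_smul {a x : ZMod p × ZMod p} :
    x ∈ AddSubgroup.zmultiples a ↔ ∃ c : ZMod p, c • a = x := by
  rw [AddSubgroup.mem_zmultiples_iff]
  constructor
  · rintro ⟨n, rfl⟩
    exact ⟨(n : ZMod p), Int.cast_smul_eq_zsmul _ n a⟩
  · rintro ⟨c, rfl⟩
    refine ⟨(c.val : ℤ), ?_⟩
    rw [← Int.cast_smul_eq_zsmul (ZMod p)]
    push_cast
    rw [ZMod.natCast_val, ZMod.cast_id]

/-- The linear functional with kernel the line through `a`. -/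
def phiHom (a : ZMod p × ZMod p) : (ZMod p × ZMod p) →+ ZMod p where
  toFun v := a.2 * v.1 - a.1 * v.2
  map_zero' := by simp
  map_add' v w := by simp only [Prod.fst_add, Prod.snd_add]; ring

lemma phiHom_apply (a v : ZMod p × ZMod p) : phiHom a v = a.2 * v.1 - a.1 * v.2 := rfl

lemma phiHom_eq_zero_of_mem {a x : ZMod p × ZMod p}
    (h : x ∈ AddSubgroup.zmultiples a) : phiHom a x = 0 := by
  obtain ⟨c, rfl⟩ := mem_zmultiples_iff_smul.1 h
  rw [phiHom_apply]
  simp only [Prod.smul_fst, Prod.smul_snd, smul_eq_mul]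
  ring

lemma mem_zmultiples_of_phiHom_eq_zero {a x : ZMod p × ZMod p} (ha : a ≠ 0)
    (h : phiHom a x = 0) : x ∈ AddSubgroup.zmultiples a := by
  rw [phiHom_apply, sub_eq_zero] at h
  rw [mem_zmultiples_iff_smul]
  by_cases h1 : a.1 = 0
  · have h2 : a.2 ≠ 0 := fun h2 => ha (Prod.ext_iff.2 ⟨h1, h2⟩)
    have hx1 : x.1 = 0 := by
      have : a.2 * x.1 = 0 := by rw [h, h1, zero_mul]
      exact (mul_eq_zero.1 this).resolve_left h2
    refine ⟨x.2 * a.2⁻¹, Prod.ext_iff.2 ⟨?_, ?_⟩⟩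
    · simp [h1, hx1]
    · simp only [Prod.smul_snd, smul_eq_mul]
      field_simp
  · refine ⟨x.1 * a.1⁻¹, Prod.ext_iff.2 ⟨?_, ?_⟩⟩
    · simp only [Prod.smul_fst, smul_eq_mul]
      field_simp
    · simp only [Prod.smul_snd, smul_eq_mul]
      field_simp
      linear_combination h

lemma two_mul_le_aux {m k : ℕ} (hm : 1 ≤ m) (hk : 1 ≤ k) :
    2 * (m + k) ≤ (k + 1) * (m + 1) := by
  obtain ⟨m', rfl⟩ := Nat.exists_eq_add_of_le hm
  obtain ⟨k', rfl⟩ := Nat.exists_eq_add_of_le hk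
  nlinarith [Nat.zero_le (m' * k')]

end TwoD

theorem stmt_9 (p : ℕ) (hp : p.Prime) (A : Multiset (ZMod p × ZMod p)) (hA : ValidMS p A)
    (hcard : Multiset.card A = p) :
    (sumset A).ncard ≥ 2 * p := by
  classical
  haveI : Fact p.Prime := ⟨hp⟩
  obtain ⟨h0A, hline⟩ := hA
  have hp2 : 2 ≤ p := hp.two_le
  have hA0 : A ≠ 0 := by
    intro h; rw [h] at hcard; simp at hcard; omega
  obtain ⟨a, haA⟩ := Multiset.exists_mem_of_ne_zero hA0
  have ha0 : a ≠ 0 := fun h => h0A (h ▸ haA)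
  set L := AddSubgroup.zmultiples a with hL
  set Ain := A.filter (fun x => x ∈ L) with hAin
  set Aout := A.filter (fun x => ¬ x ∈ L) with hAout
  have hsplit : Ain + Aout = A := Multiset.filter_add_not _ A
  set m := Multiset.card Ain with hm
  set k := Multiset.card Aout with hk
  have hmk : m + k = p := by
    rw [hm, hk, ← Multiset.card_add, hsplit, hcard]
  have hm1 : 1 ≤ m := by
    have h1 : a ∈ Ain := Multiset.mem_filter.2 ⟨haA, AddSubgroup.mem_zmultiples a⟩
    have h2 := Multiset.card_pos_iff_exists_mem.2 ⟨a, h1⟩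
    omega
  have hmp : m < p := by
    have h1 := hline a ha0
    rw [← hL] at h1
    have h2 : inCount A L = m := by
      rw [hm, hAin]
      exact congrArg Multiset.card (Multiset.filter_congr fun x _ => Iff.rfl)
    omega
  have hk1 : 1 ≤ k := by omega
  -- a functional not vanishing at a
  obtain ⟨ψ, hψ⟩ : ∃ ψ : (ZMod p × ZMod p) →ₗ[ZMod p] ZMod p, ψ a ≠ 0 := by
    by_cases h1 : a.1 = 0
    · refine ⟨LinearMap.snd _ _ _, fun h2 => ha0 (Prod.ext_iff.2 ⟨h1, h2⟩)⟩
    · exact ⟨LinearMap.fst _ _ _, h1⟩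
  have hLne : ∀ x ∈ Ain, ψ x ≠ 0 := by
    intro x hx
    obtain ⟨hxA, hxL⟩ := Multiset.mem_filter.1 hx
    have hx0 : x ≠ 0 := fun h => h0A (h ▸ hxA)
    obtain ⟨c, rfl⟩ := mem_zmultiples_iff_smul.1 hxL
    have hc : c ≠ 0 := fun h => hx0 (by simp [h])
    rw [map_smul, smul_eq_mul]
    exact mul_ne_zero hc hψ
  set S := Fsum Ain with hSdef
  set T := Fsum Aout with hTdef
  have hSker : ∀ s ∈ S, phiHom a s = 0 := by
    intro s hs
    have : s ∈ (phiHom a).ker := by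
      refine Fsum_subset_addSubgroup (fun x hx => ?_) hs
      obtain ⟨hxA, hxL⟩ := Multiset.mem_filter.1 hx
      exact AddMonoidHom.mem_ker.2 (phiHom_eq_zero_of_mem hxL)
    exact AddMonoidHom.mem_ker.1 this
  have hScard : m + 1 ≤ S.card := by
    have h1 := Fsum_card_min (Ain.map ψ.toAddMonoidHom) ?_
    · rw [Fsum_map, Multiset.card_map] at h1
      have h2 : ((Fsum Ain).image ψ.toAddMonoidHom).card ≤ S.card :=
        Finset.card_image_le
      have h3 : min p (m + 1) = m + 1 := min_eq_right (by omega)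
      omega
    · intro y hy
      obtain ⟨x, hx, rfl⟩ := Multiset.mem_map.1 hy
      exact hLne x hx
  set I := T.image (phiHom a) with hIdef
  have hIcard : k + 1 ≤ I.card := by
    have h1 := Fsum_card_min (Aout.map (phiHom a)) ?_
    · rw [Fsum_map, Multiset.card_map] at h1
      have h3 : min p (k + 1) = k + 1 := min_eq_right (by omega)
      rw [h3] at h1
      exact h1
    · intro y hy
      obtain ⟨x, hx, rfl⟩ := Multiset.mem_map.1 hy
      obtain ⟨hxA, hxL⟩ := Multiset.mem_filter.1 hx
      exact fun h => hxL (mem_zmultiples_of_phiHom_eq_zero ha0 h)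
  -- pick representatives in each coset
  have hpick : ∀ v : ZMod p, ∃ t, v ∈ I → t ∈ T ∧ phiHom a t = v := by
    intro v
    by_cases hv : v ∈ I
    · obtain ⟨t, ht, hφ⟩ := Finset.mem_image.1 hv
      exact ⟨t, fun _ => ⟨ht, hφ⟩⟩
    · exact ⟨0, fun h => absurd h hv⟩
  choose g hg using hpick
  set U := I.biUnion (fun v => S.image (· + g v)) with hUdef
  have hdisj : ∀ v ∈ I, ∀ w ∈ I, v ≠ w →
      Disjoint (S.image (· + g v)) (S.image (· + g w)) := by
    intro v hv w hw hvw
    rw [Finset.disjoint_left]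
    rintro u hu1 hu2
    obtain ⟨s, hs, rfl⟩ := Finset.mem_image.1 hu1
    obtain ⟨s', hs', heq⟩ := Finset.mem_image.1 hu2
    apply hvw
    have h1 : phiHom a (s + g v) = v := by
      rw [map_add, hSker s hs, (hg v hv).2, zero_add]
    have h2 : phiHom a (s' + g w) = w := by
      rw [map_add, hSker s' hs', (hg w hw).2, zero_add]
    rw [← h1, ← h2, heq]
  have hUcard : U.card = I.card * S.card := by
    rw [hUdef, Finset.card_biUnion hdisj]
    rw [Finset.sum_congr rfl
      (fun v _ => Finset.card_image_of_injective S (add_left_injective (g v)))]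
    rw [Finset.sum_const, smul_eq_mul]
  have hUsub : U ⊆ Fsum A := by
    intro u hu
    obtain ⟨v, hv, hu2⟩ := Finset.mem_biUnion.1 hu
    obtain ⟨s, hs, rfl⟩ := Finset.mem_image.1 hu2
    have := add_mem_Fsum_add hs ((hg v hv).1 : g v ∈ T)
    rwa [hsplit] at this
  have hcardFA : 2 * p ≤ (Fsum A).card := by
    have h1 : U.card ≤ (Fsum A).card := Finset.card_le_card hUsub
    have h2 : (k + 1) * (m + 1) ≤ I.card * S.card := Nat.mul_le_mul hIcard hScard
    have h3 : 2 * p ≤ (k + 1) * (m + 1) := by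
      rw [← hmk]
      exact two_mul_le_aux hm1 hk1
    omega
  have hset : sumset A = ↑(Fsum A) := by
    ext x
    simp [sumset, mem_Fsum]
  rw [ge_iff_le, hset, Set.ncard_coe_finset]
  exact hcardFA
end

section
/- Let p ≥ 5 be a prime and let A be a valid multiset contained in (Z/pZ)^2 with |A| = p + 1. Then #ΣA ≥ 3p. -/
/-!
Project along a linear form `φ : (ZMod p)² → ZMod p` whose kernel is a line `L` and count `ΣA`
fiber by fiber. If `A = N + M` with `N ⊆ L`, every fiber of `ΣA` over a value of `φ(ΣM)` contains
a translate of `ΣN`; as every nonzero element has order `p`, Cauchy–Davenport bounds from below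
both the number of such values and the sizes of these fibers.

If a line carries `m ≥ 2` elements of `A`, take it as `L`: then
`#ΣA ≥ min p (p + 2 - m) * (m + 1) ≥ 3p`. Otherwise no line carries two elements of `A`; take
`L = ⟨a⟩` for some `a ∈ A`. The other `p` elements have nonzero images in `ZMod p`, so two of
them, `b ≠ b'`, share an image; writing `D` for the remaining `p - 2`, the fibers over
`φ b + φ(ΣD)` of the sums of these `p` elements have two points. If the images of `D` are
distinct, their subset sums cover `ZMod p`, so every fiber of `ΣA` has three points. Otherwise `D`
contains a second such pair `e ≠ e'`, the fibers over the `p - 3` values `φ b + φ e + φ(ΣE)` gain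
a third point, and counting again gives `#ΣA ≥ 3p`.
-/

open Finset
open scoped Pointwise

section SumsetFinset

variable {G : Type*} [AddCommGroup G] [DecidableEq G]

def sumsetFinset (A : Multiset G) : Finset G := (A.powerset.map Multiset.sum).toFinset

@[simp]
lemma mem_sumsetFinset {A : Multiset G} {x : G} : x ∈ sumsetFinset A ↔ ∃ B ≤ A, B.sum = x := by
  simp [sumsetFinset]

lemma coe_sumsetFinset (A : Multiset G) : (sumsetFinset A : Set G) = sumset A := by
  ext; simp [sumset]

lemma sumsetFinset_zero : sumsetFinset (0 : Multiset G) = {0} := by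
  simp [sumsetFinset]

lemma sumsetFinset_cons (a : G) (A : Multiset G) :
    sumsetFinset (a ::ₘ A) = {0, a} + sumsetFinset A := by
  ext x
  simp [sumsetFinset, Multiset.powerset_cons, mem_add, or_comm, eq_comm]

lemma sumsetFinset_add (A B : Multiset G) :
    sumsetFinset (A + B) = sumsetFinset A + sumsetFinset B := by
  induction A using Multiset.induction_on with
  | empty => rw [zero_add, sumsetFinset_zero, singleton_zero, zero_add]
  | cons a A ih => rw [Multiset.cons_add, sumsetFinset_cons, sumsetFinset_cons, ih, add_assoc]

lemma mem_sumsetFinset_of_mem {A : Multiset G} {a : G} (ha : a ∈ A) : a ∈ sumsetFinset A :=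
  mem_sumsetFinset.2 ⟨{a}, Multiset.singleton_le.2 ha, Multiset.sum_singleton a⟩

lemma zero_mem_sumsetFinset (A : Multiset G) : (0 : G) ∈ sumsetFinset A :=
  mem_sumsetFinset.2 ⟨0, Multiset.zero_le A, Multiset.sum_zero⟩

variable {K : Type*} [AddCommGroup K]

lemma image_sumsetFinset [DecidableEq K] (φ : G →+ K) (A : Multiset G) :
    (sumsetFinset A).image φ = sumsetFinset (A.map φ) := by
  induction A using Multiset.induction_on with
  | empty => simp [sumsetFinset_zero]
  | cons a A ih => simp [sumsetFinset_cons, image_add, ih]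

lemma map_eq_zero_of_mem_sumsetFinset {φ : G →+ K} {N : Multiset G} (hN : ∀ n ∈ N, φ n = 0)
    {x : G} (hx : x ∈ sumsetFinset N) : φ x = 0 := by
  obtain ⟨B, hB, rfl⟩ := mem_sumsetFinset.1 hx
  rw [map_multiset_sum]
  exact Multiset.sum_eq_zero fun y hy => by
    obtain ⟨b, hb, rfl⟩ := Multiset.mem_map.1 hy
    exact hN b (Multiset.mem_of_le hB hb)

end SumsetFinset

section CauchyDavenport

variable {G : Type*} [AddCommGroup G] [DecidableEq G] {p : ℕ}

lemma min_le_card_add_of_le_minOrder (hG : (p : ℕ∞) ≤ AddMonoid.minOrder G) {s t : Finset G}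
    (hs : s.Nonempty) (ht : t.Nonempty) : min p (#s + #t - 1) ≤ #(s + t) := by
  rcases min_le_iff.1 (cauchy_davenport_minOrder_add hs ht) with h | h
  · exact min_le_of_left_le (mod_cast hG.trans h)
  · exact min_le_of_right_le (mod_cast h)

lemma min_le_card_add_sumsetFinset (hG : (p : ℕ∞) ≤ AddMonoid.minOrder G) {S : Finset G}
    (hS : S.Nonempty) {A : Multiset G} (hA : 0 ∉ A) :
    min p (#S + Multiset.card A) ≤ #(S + sumsetFinset A) := by
  induction A using Multiset.induction_on with
  | empty => simp [sumsetFinset_zero]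
  | cons a A ih =>
    have ha : a ≠ 0 := fun h => hA (h ▸ Multiset.mem_cons_self a A)
    have ih := ih fun h => hA (Multiset.mem_cons_of_mem h)
    have hstep := min_le_card_add_of_le_minOrder hG (hS.add ⟨0, zero_mem_sumsetFinset A⟩)
      (insert_nonempty 0 {a})
    rw [card_pair (Ne.symm ha)] at hstep
    rw [sumsetFinset_cons, add_left_comm, add_comm ({0, a} : Finset G), Multiset.card_cons]
    omega

lemma min_le_card_sumsetFinset (hG : (p : ℕ∞) ≤ AddMonoid.minOrder G) {A : Multiset G}
    (hA : 0 ∉ A) : min p (Multiset.card A + 1) ≤ #(sumsetFinset A) := by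
  simpa [add_comm] using min_le_card_add_sumsetFinset hG (singleton_nonempty 0) hA

end CauchyDavenport

section Fibers

variable {G K : Type*} [AddCommGroup G] [DecidableEq G] [AddCommGroup K] [DecidableEq K]
  {φ : G →+ K}

lemma min_le_card_fiber_add_of_ker {p : ℕ} (hG : (p : ℕ∞) ≤ AddMonoid.minOrder G)
    {N M : Multiset G} (hN : ∀ n ∈ N, φ n = 0) (hN0 : 0 ∉ N) {c : K}
    (hc : {x ∈ sumsetFinset M | φ x = c}.Nonempty) :
    min p (#{x ∈ sumsetFinset M | φ x = c} + Multiset.card N) ≤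
      #{x ∈ sumsetFinset (N + M) | φ x = c} := by
  refine (min_le_card_add_sumsetFinset hG hc hN0).trans (card_le_card fun y hy => ?_)
  obtain ⟨x, hx, n, hn, rfl⟩ := mem_add.1 hy
  rw [mem_filter] at hx ⊢
  refine ⟨?_, by rw [map_add, hx.2, map_eq_zero_of_mem_sumsetFinset hN hn, add_zero]⟩
  rw [sumsetFinset_add, add_comm]
  exact add_mem_add hx.1 hn

lemma card_le_card_fiber_add {P D : Multiset G} {S : Finset G} (hS : S ⊆ sumsetFinset P)
    {t : K} (hSφ : ∀ s ∈ S, φ s = t) {v : G} (hv : v ∈ sumsetFinset D) :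
    #S ≤ #{x ∈ sumsetFinset (P + D) | φ x = t + φ v} := by
  rw [← card_image_of_injective S (add_left_injective v)]
  refine card_le_card fun y hy => ?_
  obtain ⟨s, hs, rfl⟩ := mem_image.1 hy
  rw [mem_filter, sumsetFinset_add, map_add, hSφ s hs]
  exact ⟨add_mem_add (hS hs) hv, rfl⟩

end Fibers

section Pigeonhole

variable {α β : Type*}

lemma Multiset.not_nodup_map_of_card_le [Fintype β] {M : Multiset α} {f : α → β} {y : β}
    (hf : ∀ a ∈ M, f a ≠ y) (hcard : Fintype.card β ≤ Multiset.card M) : ¬ (M.map f).Nodup := by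
  classical
  intro hnd
  have hsub : (M.map f).toFinset ⊆ univ.erase y := fun z hz => by
    obtain ⟨a, ha, rfl⟩ := Multiset.mem_map.1 (Multiset.mem_toFinset.1 hz)
    exact mem_erase.2 ⟨hf a ha, mem_univ _⟩
  have := Finset.card_le_card hsub
  rw [Multiset.toFinset_card_of_nodup hnd, Multiset.card_map,
    Finset.card_erase_of_mem (mem_univ y), Finset.card_univ] at this
  have : 0 < Fintype.card β := Fintype.card_pos_iff.2 ⟨y⟩
  omega

lemma Multiset.exists_eq_pair_add_of_not_nodup_map [DecidableEq α] {M : Multiset α} {f : α → β}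
    (h : ¬ (M.map f).Nodup) : ∃ b b' D, M = {b, b'} + D ∧ f b = f b' := by
  obtain ⟨t, T, hT⟩ : ∃ t T, M.map f = t ::ₘ t ::ₘ T := by
    simpa [Multiset.nodup_iff_ne_cons_cons] using h
  obtain ⟨b, hb, rfl, hT⟩ := (Multiset.map_eq_cons f M _ t).2 hT
  obtain ⟨b', hb', hbb', -⟩ := (Multiset.map_eq_cons f _ _ _).2 hT
  refine ⟨b, b', (M.erase b).erase b', ?_, hbb'.symm⟩
  rw [Multiset.insert_eq_cons, Multiset.cons_add, Multiset.singleton_add,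
    Multiset.cons_erase hb', Multiset.cons_erase hb]

lemma Multiset.exists_eq_pair_add_of_nodup [AddGroup α] {M : Multiset α} (hnd : M.Nodup)
    (h3 : 3 ≤ Multiset.card M) : ∃ s s' Y, M = {s, s'} + Y ∧ s ≠ s' ∧ s + s' ≠ 0 := by
  obtain ⟨u, hu, w, hw, r, hr, huw, hur, hwr⟩ := (Finset.two_lt_card (s := ⟨M, hnd⟩)).1 h3
  obtain ⟨s, hs, s', hs', hss', hsum⟩ : ∃ s ∈ M, ∃ s' ∈ M, s ≠ s' ∧ s + s' ≠ 0 := by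
    by_cases huw' : u + w = 0
    · by_cases hur' : u + r = 0
      · exact absurd (add_left_cancel (huw'.trans hur'.symm)) hwr
      · exact ⟨u, hu, r, hr, hur, hur'⟩
    · exact ⟨u, hu, w, hw, huw, huw'⟩
  have hle : ({s, s'} : Multiset α) ≤ M :=
    (Multiset.le_iff_subset (by simp [hss'])).2 (by simp [Multiset.cons_subset, hs, hs'])
  obtain ⟨Y, hY⟩ := Multiset.le_iff_exists_add.1 hle
  exact ⟨s, s', Y, hY, hss', hsum⟩

end Pigeonhole

lemma le_minOrder_zmod (p : ℕ) [Fact p.Prime] : (p : ℕ∞) ≤ AddMonoid.minOrder (ZMod p) :=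
  (ZMod.minOrder_of_prime (Fact.out : p.Prime)).ge

lemma le_minOrder_zmod_prod (p : ℕ) [Fact p.Prime] :
    (p : ℕ∞) ≤ AddMonoid.minOrder (ZMod p × ZMod p) :=
  AddMonoid.le_minOrder.2 fun a ha _ => by rw [addOrderOf_eq_prime (p := p) (by ext <;> simp) ha]

section ZModPrime

variable {p : ℕ} [Fact p.Prime]

lemma sumsetFinset_eq_univ_of_nodup {X : Multiset (ZMod p)} (hnd : X.Nodup) (h0 : 0 ∉ X)
    (h3 : 3 ≤ Multiset.card X) (hp : p ≤ Multiset.card X + 2) : sumsetFinset X = univ := by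
  obtain ⟨s, s', Y, rfl, hss', hsum⟩ := Multiset.exists_eq_pair_add_of_nodup hnd h3
  have hs : s ≠ 0 := fun h => h0 (by simp [h])
  have hs' : s' ≠ 0 := fun h => h0 (by simp [h])
  have hY : 0 ∉ Y := fun h => h0 (Multiset.mem_add.2 (Or.inr h))
  have hpair : ({0, s, s', s + s'} : Finset (ZMod p)) ⊆ sumsetFinset {s, s'} := by
    simp only [insert_subset_iff, singleton_subset_iff, zero_mem_sumsetFinset, true_and]
    exact ⟨mem_sumsetFinset_of_mem (by simp), mem_sumsetFinset_of_mem (by simp),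
      mem_sumsetFinset.2 ⟨_, le_rfl, by simp⟩⟩
  have h4 : 4 ≤ #(sumsetFinset ({s, s'} : Multiset (ZMod p))) := by
    refine le_trans (le_of_eq ?_) (card_le_card hpair)
    rw [card_insert_of_notMem, card_insert_of_notMem, card_pair] <;> simp [*, eq_comm]
  have hgrow := min_le_card_add_sumsetFinset (le_minOrder_zmod p)
    ⟨0, zero_mem_sumsetFinset _⟩ hY (S := sumsetFinset {s, s'})
  rw [← sumsetFinset_add] at hgrow
  simp only [Multiset.card_add, Multiset.insert_eq_cons, Multiset.card_cons,
    Multiset.card_singleton] at hp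
  refine eq_univ_of_card _ (le_antisymm (card_le_univ _) ?_)
  rw [ZMod.card]
  omega

variable {G : Type*} [AddCommGroup G] [DecidableEq G]

lemma min_le_card_image_sumsetFinset {φ : G →+ ZMod p} {M : Multiset G}
    (hM : ∀ b ∈ M, φ b ≠ 0) : min p (Multiset.card M + 1) ≤ #((sumsetFinset M).image φ) := by
  rw [image_sumsetFinset]
  simpa using min_le_card_sumsetFinset (le_minOrder_zmod p) (A := M.map φ) (by simpa using hM)

lemma image_sumsetFinset_eq_univ {φ : G →+ ZMod p} {M : Multiset G}
    (hM : ∀ b ∈ M, φ b ≠ 0) (hcard : p ≤ Multiset.card M + 1) :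
    (sumsetFinset M).image φ = univ := by
  have := min_le_card_image_sumsetFinset hM
  refine eq_univ_of_card _ (le_antisymm (card_le_univ _) ?_)
  rw [ZMod.card]
  omega

end ZModPrime

section PairFibers

variable {G : Type*} [AddCommGroup G] [DecidableEq G] {p : ℕ} {φ : G →+ ZMod p}
  {b b' e e' v : G} {D E : Multiset G}

lemma two_le_card_fiber_pair_add (hbb' : b ≠ b') (hφb : φ b = φ b')
    (hv : v ∈ sumsetFinset D) : 2 ≤ #{x ∈ sumsetFinset ({b, b'} + D) | φ x = φ b + φ v} := by
  have hS : ({b, b'} : Finset G) ⊆ sumsetFinset {b, b'} := by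
    simp only [insert_subset_iff, singleton_subset_iff]
    exact ⟨mem_sumsetFinset_of_mem (by simp), mem_sumsetFinset_of_mem (by simp)⟩
  simpa [card_pair hbb'] using card_le_card_fiber_add hS (by simp [hφb]) hv

lemma three_le_card_fiber_pair_add_pair_add (hG : (p : ℕ∞) ≤ AddMonoid.minOrder G) (hp3 : 3 ≤ p)
    (hbb' : b ≠ b') (hφb : φ b = φ b') (hee' : e ≠ e') (hφe : φ e = φ e')
    (hv : v ∈ sumsetFinset E) :
    3 ≤ #{x ∈ sumsetFinset ({b, b'} + ({e, e'} + E)) | φ x = φ b + φ e + φ v} := by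
  have hS : ({b, b'} + {e, e'} : Finset G) ⊆ sumsetFinset ({b, b'} + {e, e'}) := by
    rw [sumsetFinset_add]
    refine add_subset_add ?_ ?_ <;>
      simp only [insert_subset_iff, singleton_subset_iff] <;>
      exact ⟨mem_sumsetFinset_of_mem (by simp), mem_sumsetFinset_of_mem (by simp)⟩
  have hSφ : ∀ s ∈ ({b, b'} + {e, e'} : Finset G), φ s = φ b + φ e := by
    simp only [mem_add, mem_insert, mem_singleton]
    rintro _ ⟨x, hx, y, hy, rfl⟩
    rcases hx with rfl | rfl <;> rcases hy with rfl | rfl <;> simp [hφb, hφe]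
  have hcard := min_le_card_add_of_le_minOrder hG (insert_nonempty b {b'}) (insert_nonempty e {e'})
  rw [card_pair hbb', card_pair hee'] at hcard
  rw [← add_assoc]
  have := card_le_card_fiber_add hS hSφ hv
  omega

lemma three_mul_le_sum_of_pair_add_of_image_eq_univ [NeZero p] (hp3 : 3 ≤ p) (hbb' : b ≠ b')
    (hφb : φ b = φ b') (hD : (sumsetFinset D).image φ = univ) :
    3 * p ≤ ∑ c, min p (#{x ∈ sumsetFinset ({b, b'} + D) | φ x = c} + 1) := by
  have hfib : ∀ c, 2 ≤ #{x ∈ sumsetFinset ({b, b'} + D) | φ x = c} := fun c => by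
    obtain ⟨v, hv, hvc⟩ := mem_image.1 (hD ▸ mem_univ (c - φ b))
    simpa [hvc] using two_le_card_fiber_pair_add hbb' hφb hv
  calc 3 * p = ∑ _c : ZMod p, 3 := by simp [mul_comm]
    _ ≤ _ := sum_le_sum fun c _ => le_min (by omega) (by have := hfib c; omega)

lemma three_mul_le_sum_of_two_pairs_add [Fact p.Prime] (hG : (p : ℕ∞) ≤ AddMonoid.minOrder G)
    (hp4 : 4 ≤ p)
    (hbb' : b ≠ b') (hφb : φ b = φ b') (hee' : e ≠ e') (hφe : φ e = φ e')
    (he : φ e ≠ 0) (hE : ∀ x ∈ E, φ x ≠ 0) (hcardE : p ≤ Multiset.card E + 4)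
    (hcov : (sumsetFinset ({b, b'} + ({e, e'} + E))).image φ = univ) :
    3 * p ≤ ∑ c, min p (#{x ∈ sumsetFinset ({b, b'} + ({e, e'} + E)) | φ x = c} + 1) := by
  set f := fun c => #{x ∈ sumsetFinset ({b, b'} + ({e, e'} + E)) | φ x = c}
  set Q₂ := ((sumsetFinset ({e, e'} + E)).image φ).image (φ b + ·)
  set Q₃ := ((sumsetFinset E).image φ).image (φ b + φ e + ·)
  have hQ₂ : p - 1 ≤ #Q₂ := by
    have := min_le_card_image_sumsetFinset (φ := φ) (M := {e, e'} + E)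
      (by simpa [or_imp, forall_and, he, ← hφe] using hE)
    have hcard : Multiset.card ({e, e'} + E) = Multiset.card E + 2 := by simp
    rw [card_image_of_injective _ (add_right_injective _)]
    rw [hcard] at this
    omega
  have hQ₃ : p - 3 ≤ #Q₃ := by
    have := min_le_card_image_sumsetFinset hE
    rw [card_image_of_injective _ (add_right_injective _)]
    omega
  have hf : ∀ c, 2 + (if c ∈ Q₂ then 1 else 0) + (if c ∈ Q₃ then 1 else 0) ≤ min p (f c + 1) := by
    intro c
    have h₁ : 1 ≤ f c := by
      obtain ⟨x, hx, rfl⟩ := mem_image.1 (hcov ▸ mem_univ c)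
      exact card_pos.2 ⟨x, mem_filter.2 ⟨hx, rfl⟩⟩
    have h₂ : c ∈ Q₂ → 2 ≤ f c := by
      simp only [Q₂, mem_image]
      rintro ⟨_, ⟨v, hv, rfl⟩, rfl⟩
      exact two_le_card_fiber_pair_add hbb' hφb hv
    have h₃ : c ∈ Q₃ → 3 ≤ f c := by
      simp only [Q₃, mem_image]
      rintro ⟨_, ⟨v, hv, rfl⟩, rfl⟩
      exact three_le_card_fiber_pair_add_pair_add hG (by omega) hbb' hφb hee' hφe hv
    split_ifs with hc₂ hc₃ hc₃
    · have := h₃ hc₃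
      omega
    · have := h₂ hc₂
      omega
    · have := h₃ hc₃
      omega
    · omega
  calc 3 * p ≤ 2 * p + #Q₂ + #Q₃ := by omega
    _ = ∑ c, (2 + (if c ∈ Q₂ then 1 else 0) + (if c ∈ Q₃ then 1 else 0)) := by
      simp [sum_add_distrib, mul_comm]
    _ ≤ _ := sum_le_sum fun c _ => hf c

lemma three_mul_le_card_sumsetFinset_cons [Fact p.Prime]
    (hG : (p : ℕ∞) ≤ AddMonoid.minOrder G) (hp5 : 5 ≤ p) {a : G} {M : Multiset G} (ha : a ≠ 0)
    (hφa : φ a = 0) (hnd : M.Nodup) (hcard : Multiset.card M = p) (hφ : ∀ b ∈ M, φ b ≠ 0) :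
    3 * p ≤ #(sumsetFinset (a ::ₘ M)) := by
  have hcov := image_sumsetFinset_eq_univ hφ (by omega)
  have hsum : 3 * p ≤ ∑ c, min p (#{x ∈ sumsetFinset M | φ x = c} + 1) := by
    obtain ⟨b, b', D, rfl, hφb⟩ := Multiset.exists_eq_pair_add_of_not_nodup_map
      (Multiset.not_nodup_map_of_card_le hφ (by simp [hcard]))
    have hbb' : b ≠ b' := by simpa using (Multiset.nodup_add.1 hnd).1
    have hcardD : Multiset.card D + 2 = p := by simp at hcard; omega
    have hD : ∀ d ∈ D, φ d ≠ 0 := fun d hd => hφ d (Multiset.mem_add.2 (Or.inr hd))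
    by_cases hDnd : (D.map φ).Nodup
    · refine three_mul_le_sum_of_pair_add_of_image_eq_univ (by omega) hbb' hφb ?_
      rw [image_sumsetFinset]
      exact sumsetFinset_eq_univ_of_nodup hDnd (by simpa using hD)
        (by rw [Multiset.card_map]; omega) (by rw [Multiset.card_map]; omega)
    · obtain ⟨e, e', E, rfl, hφe⟩ := Multiset.exists_eq_pair_add_of_not_nodup_map hDnd
      have hee' : e ≠ e' := by simpa using (Multiset.nodup_add.1 (Multiset.nodup_add.1 hnd).2.1).1
      exact three_mul_le_sum_of_two_pairs_add hG (by omega) hbb' hφb hee' hφe (hD e (by simp))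
        (fun x hx => hD x (by simp [hx])) (by simp at hcardD; omega) hcov
  calc 3 * p ≤ ∑ c, min p (#{x ∈ sumsetFinset M | φ x = c} + 1) := hsum
    _ ≤ ∑ c, #{x ∈ sumsetFinset ({a} + M) | φ x = c} := sum_le_sum fun c _ => by
      obtain ⟨x, hx, rfl⟩ := mem_image.1 (hcov ▸ mem_univ c)
      simpa using min_le_card_fiber_add_of_ker hG (N := {a}) (by simpa using hφa)
        (by simpa using ha.symm) ⟨x, mem_filter.2 ⟨hx, rfl⟩⟩
    _ = #(sumsetFinset (a ::ₘ M)) := by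
      rw [Multiset.singleton_add, card_eq_sum_card_fiberwise (f := φ) fun _ _ => mem_univ _]

end PairFibers

section InCount

variable {G : Type*} [AddCommGroup G] {A : Multiset G}

lemma two_le_inCount_of_pair_le {H : AddSubgroup G} {a b : G} (hab : {a, b} ≤ A) (ha : a ∈ H)
    (hb : b ∈ H) : 2 ≤ inCount A H := by
  classical
  unfold inCount
  simpa using Multiset.card_le_card (Multiset.le_filter.2 ⟨hab, by simp [ha, hb]⟩)

lemma nodup_of_inCount_le_one (hA0 : 0 ∉ A)
    (h1 : ∀ x, x ≠ 0 → inCount A (AddSubgroup.zmultiples x) ≤ 1) : A.Nodup := by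
  refine Multiset.nodup_iff_ne_cons_cons.2 fun a t hA => ?_
  have ha : a ≠ 0 := fun h => hA0 (by simp [hA, h])
  have := two_le_inCount_of_pair_le (hA ▸ Multiset.cons_le_cons a
    (Multiset.singleton_le.2 (Multiset.mem_cons_self a t))) (AddSubgroup.mem_zmultiples a)
    (AddSubgroup.mem_zmultiples a)
  have := h1 a ha
  omega

end InCount

lemma three_mul_le_min_mul {p m k : ℕ} (hm : 2 ≤ m) (hmp : m < p) (hmk : m + k = p + 1) :
    3 * p ≤ min p (k + 1) * (m + 1) := by
  rcases le_total p (k + 1) with h | h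
  · rw [min_eq_left h]
    nlinarith
  · rw [min_eq_right h]
    nlinarith

lemma mem_zmultiples_iff_exists_zmod_smul {n : ℕ} {V : Type*} [AddCommGroup V]
    [Module (ZMod n) V] {x z : V} : z ∈ AddSubgroup.zmultiples x ↔ ∃ c : ZMod n, c • x = z := by
  rw [AddSubgroup.mem_zmultiples_iff]
  refine ⟨fun ⟨k, hk⟩ => ⟨k, by rw [Int.cast_smul_eq_zsmul, hk]⟩, fun ⟨c, hc⟩ => ⟨c.cast, ?_⟩⟩
  rw [← Int.cast_smul_eq_zsmul (ZMod n), ZMod.intCast_zmod_cast, hc]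

section Plane

variable {p : ℕ} [Fact p.Prime]

open AddSubgroup

def detForm (x : ZMod p × ZMod p) : ZMod p × ZMod p →+ ZMod p :=
  AddMonoidHom.mk' (fun z => x.1 * z.2 - x.2 * z.1) fun a b => by
    simp only [Prod.fst_add, Prod.snd_add]
    ring

lemma detForm_eq_zero_iff {x : ZMod p × ZMod p} (hx : x ≠ 0) {z : ZMod p × ZMod p} :
    detForm x z = 0 ↔ z ∈ zmultiples x := by
  rw [mem_zmultiples_iff_exists_zmod_smul (n := p)]
  simp only [detForm, AddMonoidHom.mk'_apply, sub_eq_zero]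
  constructor
  · intro h
    by_cases h₁ : x.1 = 0
    · have h₂ : x.2 ≠ 0 := fun h₂ => hx (Prod.ext h₁ h₂)
      have hz : z.1 = 0 := by simpa [h₁, h₂] using h
      exact ⟨z.2 / x.2, Prod.ext (by simp [h₁, hz]) (by simp [h₂])⟩
    · refine ⟨z.1 / x.1, Prod.ext (by simp [h₁]) ?_⟩
      simp only [Prod.smul_snd, smul_eq_mul]
      field_simp
      linear_combination -h
  · rintro ⟨c, rfl⟩
    simp only [Prod.smul_fst, Prod.smul_snd, smul_eq_mul]
    ring

lemma three_mul_le_card_sumsetFinset_of_two_le_inCount {A : Multiset (ZMod p × ZMod p)}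
    (hA : ValidMS p A) (hcard : Multiset.card A = p + 1) {x : ZMod p × ZMod p} (hx : x ≠ 0)
    (h2 : 2 ≤ inCount A (zmultiples x)) : 3 * p ≤ #(sumsetFinset A) := by
  obtain ⟨N, M, rfl, hN, hNL, hML⟩ : ∃ N M : Multiset (ZMod p × ZMod p), N + M = A ∧
      Multiset.card N = inCount A (zmultiples x) ∧ (∀ n ∈ N, n ∈ zmultiples x) ∧
      ∀ b ∈ M, b ∉ zmultiples x := by
    classical
    exact ⟨_, _, Multiset.filter_add_not _ A, rfl, fun n hn => Multiset.of_mem_filter hn,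
      fun b hb => Multiset.of_mem_filter (p := fun b => b ∉ zmultiples x) hb⟩
  have hNp : Multiset.card N < p := hN ▸ hA.2 x hx
  have hfib : ∀ c ∈ (sumsetFinset M).image (detForm x),
      Multiset.card N + 1 ≤ #{y ∈ sumsetFinset (N + M) | detForm x y = c} := by
    intro c hc
    obtain ⟨v, hv, rfl⟩ := mem_image.1 hc
    have hne : {y ∈ sumsetFinset M | detForm x y = detForm x v}.Nonempty :=
      ⟨v, mem_filter.2 ⟨hv, rfl⟩⟩
    have := min_le_card_fiber_add_of_ker (le_minOrder_zmod_prod p)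
      (fun n hn => (detForm_eq_zero_iff hx).2 (hNL n hn))
      (fun h => hA.1 (Multiset.mem_add.2 (Or.inl h))) hne
    have := hne.card_pos
    omega
  calc 3 * p ≤ min p (Multiset.card M + 1) * (Multiset.card N + 1) :=
        three_mul_le_min_mul (hN ▸ h2) hNp (by rw [← Multiset.card_add, hcard])
    _ ≤ #((sumsetFinset M).image (detForm x)) * (Multiset.card N + 1) :=
        Nat.mul_le_mul_right _ (min_le_card_image_sumsetFinset fun b hb h =>
          hML b hb ((detForm_eq_zero_iff hx).1 h))
    _ ≤ ∑ c ∈ (sumsetFinset M).image (detForm x), #{y ∈ sumsetFinset (N + M) | detForm x y = c} :=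
        card_nsmul_le_sum _ _ _ hfib
    _ ≤ ∑ c, #{y ∈ sumsetFinset (N + M) | detForm x y = c} :=
        sum_le_sum_of_subset (subset_univ _)
    _ = #(sumsetFinset (N + M)) := (card_eq_sum_card_fiberwise fun _ _ => mem_univ _).symm

lemma three_mul_le_card_sumsetFinset_of_inCount_le_one (hp5 : 5 ≤ p)
    {A : Multiset (ZMod p × ZMod p)} (hA0 : 0 ∉ A) (hcard : Multiset.card A = p + 1)
    (h1 : ∀ x, x ≠ 0 → inCount A (zmultiples x) ≤ 1) : 3 * p ≤ #(sumsetFinset A) := by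
  have hnd := nodup_of_inCount_le_one hA0 h1
  obtain ⟨a, ha⟩ := Multiset.card_pos_iff_exists_mem.1 (by omega : 0 < Multiset.card A)
  obtain ⟨M, rfl⟩ := Multiset.exists_cons_of_mem ha
  have ha0 : a ≠ 0 := fun h => hA0 (h ▸ ha)
  refine three_mul_le_card_sumsetFinset_cons (le_minOrder_zmod_prod p) hp5 ha0
    ((detForm_eq_zero_iff ha0).2 (mem_zmultiples a)) (Multiset.nodup_cons.1 hnd).2
    (by simpa using hcard) fun b hb hb0 => ?_
  have := two_le_inCount_of_pair_le (Multiset.cons_le_cons a (Multiset.singleton_le.2 hb))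
    (mem_zmultiples a) ((detForm_eq_zero_iff ha0).1 hb0)
  have := h1 a ha0
  omega

end Plane

theorem stmt_11 (p : ℕ) (hp : p.Prime) (hp5 : p ≥ 5)
    (A : Multiset (ZMod p × ZMod p)) (hA : ValidMS p A)
    (hcard : Multiset.card A = p + 1) :
    (sumset A).ncard ≥ 3 * p := by
  have := Fact.mk hp
  rw [← coe_sumsetFinset, Set.ncard_coe_finset]
  by_cases h : ∀ x, x ≠ 0 → inCount A (AddSubgroup.zmultiples x) ≤ 1
  · exact three_mul_le_card_sumsetFinset_of_inCount_le_one hp5 hA.1 hcard h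
  · simp only [not_forall, not_le] at h
    obtain ⟨x, hx, h2⟩ := h
    exact three_mul_le_card_sumsetFinset_of_two_le_inCount hA hcard hx h2
end

section
/- Let p be prime, A a valid multiset in (Z/pZ)^2, and z a nonzero element of (Z/pZ)^2. Let m_t denote the multiplicity of t in A, and let L be the subgroup generated by z. For any integer j with 0 ≤ j ≤ (1/2)·Σ_{t ∉ L} min(m_t, m_{z−t}), we have #ΣA ≥ min(p, 1 + j + Σ_{y∈L} m_y) · min(p, 1 + |A| − 2j − Σ_{y∈L} m_y). -/
/-!
Split `A` into its part `Aₗ` inside `L = ⟨z⟩`, `j` disjoint pairs `{t, z - t}` outside `L` (each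
summing to `z`), and the rest `D`. The subsums of `Aₗ` and of the pairs cover
`T = Σ(Aₗ + {z, …, z})` (`j` copies of `z`), a subset of `L` of size at least
`min(p, |Aₗ| + j + 1)` by Cauchy–Davenport. No element of `D` lies in `L`, so Cauchy–Davenport in
`(ℤ/p)² ⧸ L ≅ ℤ/p` shows that `ΣD` meets at least `min(p, |D| + 1)` cosets of `L`; as `T ⊆ L`,
translates of `T` by elements of `ΣD` in distinct cosets are disjoint, which gives the product.
-/

open Finset
open scoped Pointwise

namespace Multiset

theorem exists_eq_add_of_le_add {α : Type*} [DecidableEq α] {B X Y : Multiset α}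
    (h : B ≤ X + Y) : ∃ B₁ ≤ X, ∃ B₂ ≤ Y, B = B₁ + B₂ :=
  ⟨B ∩ X, inter_le_right, B - X, tsub_le_iff_left.2 h, by rw [add_comm, sub_add_inter]⟩

section AddCommMonoid

variable {G : Type*} [AddCommMonoid G] [DecidableEq G]

def subsetSums (A : Multiset G) : Finset G := (A.powerset.map sum).toFinset

theorem mem_subsetSums {A : Multiset G} {x : G} : x ∈ A.subsetSums ↔ ∃ B ≤ A, B.sum = x := by
  simp [subsetSums]

theorem zero_mem_subsetSums (A : Multiset G) : (0 : G) ∈ A.subsetSums :=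
  mem_subsetSums.2 ⟨0, zero_le A, sum_zero⟩

theorem coe_subsetSums (A : Multiset G) : (A.subsetSums : Set G) = sumset A := by
  ext x
  simp [sumset, mem_subsetSums]

theorem subsetSums_add (X Y : Multiset G) : (X + Y).subsetSums = X.subsetSums + Y.subsetSums := by
  ext x
  simp only [mem_subsetSums, Finset.mem_add]
  constructor
  · rintro ⟨B, hB, rfl⟩
    obtain ⟨B₁, h₁, B₂, h₂, rfl⟩ := exists_eq_add_of_le_add hB
    exact ⟨B₁.sum, ⟨B₁, h₁, rfl⟩, B₂.sum, ⟨B₂, h₂, rfl⟩, (sum_add _ _).symm⟩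
  · rintro ⟨_, ⟨B₁, h₁, rfl⟩, _, ⟨B₂, h₂, rfl⟩, rfl⟩
    exact ⟨B₁ + B₂, add_le_add h₁ h₂, sum_add _ _⟩

@[simp]
theorem subsetSums_zero : (0 : Multiset G).subsetSums = {0} := by
  ext x
  simp [mem_subsetSums, eq_comm]

@[simp]
theorem subsetSums_singleton (a : G) : ({a} : Multiset G).subsetSums = {0, a} := by
  ext x
  simp only [mem_subsetSums, le_singleton, Finset.mem_insert, Finset.mem_singleton]
  constructor
  · rintro ⟨B, rfl | rfl, rfl⟩ <;> simp
  · rintro (rfl | rfl)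
    exacts [⟨0, .inl rfl, sum_zero⟩, ⟨{x}, .inr rfl, sum_singleton x⟩]

theorem subsetSums_cons (a : G) (A : Multiset G) :
    (a ::ₘ A).subsetSums = {0, a} + A.subsetSums := by
  rw [← singleton_add, subsetSums_add, subsetSums_singleton]

theorem subsetSums_map {H : Type*} [AddCommMonoid H] [DecidableEq H] (f : G →+ H)
    (A : Multiset G) : (A.map f).subsetSums = A.subsetSums.image f := by
  induction A using Multiset.induction with
  | empty => simp
  | cons a A ih => simp [subsetSums_cons, ih, Finset.image_add, Finset.image_insert]

theorem coe_subsetSums_subset {S : Type*} [SetLike S G] [AddSubmonoidClass S G] {L : S}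
    {A : Multiset G} (hA : ∀ x ∈ A, x ∈ L) : (A.subsetSums : Set G) ⊆ L := by
  intro y hy
  obtain ⟨B, hB, rfl⟩ := mem_subsetSums.1 hy
  exact multiset_sum_mem B fun x hx => hA x (mem_of_le hB hx)

end AddCommMonoid

section AddCommGroup

variable {G : Type*} [AddCommGroup G] [DecidableEq G]

theorem subsetSums_replicate_card_subset (z : G) (P : Multiset G) :
    (replicate (card P) z).subsetSums ⊆ (P + P.map (z - ·)).subsetSums := by
  induction P using Multiset.induction with
  | empty => simp
  | cons t P ih =>
    have hpair : ({0, z} : Finset G) ⊆ {0, t} + {0, z - t} := by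
      rw [Finset.insert_subset_iff, Finset.singleton_subset_iff]
      exact ⟨Finset.mem_add.2 ⟨0, by simp, 0, by simp, add_zero 0⟩,
        Finset.mem_add.2 ⟨t, by simp, z - t, by simp, add_sub_cancel t z⟩⟩
    rw [card_cons, replicate_succ, map_cons, cons_add, add_cons, subsetSums_cons,
      subsetSums_cons, subsetSums_cons, ← add_assoc]
    exact add_subset_add hpair ih

theorem min_le_card_subsetSums {p : ℕ}
    (hp : (p : ℕ∞) ≤ AddMonoid.minOrder G) {A : Multiset G} (hA : (0 : G) ∉ A) :
    min p (card A + 1) ≤ #A.subsetSums := by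
  induction A using Multiset.induction with
  | empty => simp
  | cons a A ih =>
    rw [mem_cons, not_or] at hA
    have hcard : #({0, a} : Finset G) = 2 := Finset.card_pair hA.1
    have hCD := cauchy_davenport_minOrder_add (s := {0, a}) (Finset.insert_nonempty 0 {a})
      ⟨0, zero_mem_subsetSums A⟩
    have hmin : ((min p (#A.subsetSums + 1) : ℕ) : ℕ∞) ≤ #({0, a} + A.subsetSums) := by
      rw [hcard, show 2 + #A.subsetSums - 1 = #A.subsetSums + 1 by omega] at hCD
      exact (min_le_min_right _ hp).trans hCD
    have := ih hA.2
    rw [subsetSums_cons, card_cons]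
    have := Nat.cast_le.1 hmin
    omega

end AddCommGroup

end Multiset

theorem le_minOrder_of_nsmul_eq_zero {G : Type*} [AddMonoid G] {p : ℕ} (hp : p.Prime)
    (h : ∀ x : G, p • x = 0) : (p : ℕ∞) ≤ AddMonoid.minOrder G := by
  have := Fact.mk hp
  exact AddMonoid.le_minOrder.2 fun x hx _ => by exact_mod_cast (addOrderOf_eq_prime (h x) hx).ge

theorem mem_zmultiples_of_add_self_eq {G : Type*} [AddCommGroup G] {p : ℕ} (hp : p.Prime)
    (h : ∀ x : G, p • x = 0) {t z : G} (hz : z ≠ 0) (htz : t + t = z) :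
    t ∈ AddSubgroup.zmultiples z := by
  rcases hp.eq_two_or_odd' with rfl | ⟨k, rfl⟩
  · exact absurd (by rw [← htz, ← two_nsmul, h]) hz
  · refine AddSubgroup.mem_zmultiples_iff.2 ⟨((k + 1 : ℕ) : ℤ), ?_⟩
    rw [natCast_zsmul, ← htz, ← two_nsmul, ← mul_nsmul', show (k + 1) * 2 = 2 * k + 1 + 1 by ring,
      add_nsmul, h, one_nsmul, zero_add]

theorem Finset.card_mul_card_image_le_card_add {G H : Type*} [AddGroup G] [DecidableEq G]
    [AddZeroClass H] [DecidableEq H] (f : G →+ H) {s t : Finset G} (hs : ∀ x ∈ s, f x = 0) :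
    #s * #(t.image f) ≤ #(s + t) := by
  refine mul_card_image_le_card_of_maps_to (f := f) ?_ _ ?_
  · intro _ ha
    obtain ⟨x, hx, y, hy, rfl⟩ := mem_add.1 ha
    rw [map_add, hs x hx, zero_add]
    exact mem_image_of_mem f hy
  · intro _ hb
    obtain ⟨y, hy, rfl⟩ := mem_image.1 hb
    refine card_le_card_of_injOn (· + y) (fun x hx => ?_) (add_left_injective y).injOn
    simpa [hs x hx] using add_mem_add hx hy

section Pairing

variable {G : Type*} [AddCommGroup G] [Fintype G] [DecidableEq G] (L : AddSubgroup G)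
  [DecidablePred (· ∈ L)] (z : G)

def pairCount (M : Multiset G) : ℕ :=
  ∑ t, if t ∈ L then 0 else min (M.count t) (M.count (z - t))

variable {L z}

theorem pairCount_cons_cons (hz : z ∈ L) {t : G} (ht : t ∉ L) (htt : t + t ≠ z)
    (M : Multiset G) : pairCount L z (t ::ₘ (z - t) ::ₘ M) = pairCount L z M + 2 := by
  have hzt : z - t ∉ L := fun h => ht (by simpa using L.sub_mem hz h)
  have hterm : ∀ s, (if s ∈ L then 0 else
      min ((t ::ₘ (z - t) ::ₘ M).count s) ((t ::ₘ (z - t) ::ₘ M).count (z - s))) =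
      (if s ∈ L then 0 else min (M.count s) (M.count (z - s))) +
        ((if s = t then 1 else 0) + if s = z - t then 1 else 0) := by
    intro s
    by_cases hs : s ∈ L
    · have : s ≠ t := by rintro rfl; exact ht hs
      have : s ≠ z - t := by rintro rfl; exact hzt hs
      simp [*]
    · have h1 : z - s = z - t ↔ s = t := sub_right_inj
      have h2 : z - s = t ↔ s = z - t := by constructor <;> rintro rfl <;> abel
      have h3 : t ≠ z - t := fun h => htt (by rw [eq_sub_iff_add_eq] at h; exact h)
      simp only [hs, if_false, Multiset.count_cons, h1, h2]
      split_ifs <;> omega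
  unfold pairCount
  rw [Finset.sum_congr rfl fun s _ => hterm s, Finset.sum_add_distrib, Finset.sum_add_distrib,
    Finset.sum_ite_eq', Finset.sum_ite_eq']
  simp

theorem exists_pairs_of_two_mul_le_pairCount (hz : z ∈ L) (hL : ∀ t, t + t = z → t ∈ L) :
    ∀ (j : ℕ) (M : Multiset G), 2 * j ≤ pairCount L z M →
      ∃ P : Multiset G, Multiset.card P = j ∧ P + P.map (z - ·) ≤ M.filter (· ∉ L)
  | 0, _, _ => ⟨0, rfl, by simp⟩
  | j + 1, M, hM => by
    obtain ⟨t, ht, htM⟩ : ∃ t, t ∉ L ∧ 0 < min (M.count t) (M.count (z - t)) := by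
      by_contra! h
      have : pairCount L z M = 0 :=
        Finset.sum_eq_zero fun t _ => by
          split_ifs with ht
          exacts [rfl, Nat.le_zero.1 (h t ht)]
      omega
    have htt : t + t ≠ z := fun h => ht (hL t h)
    have hzt : z - t ∉ L := fun h => ht (by simpa using L.sub_mem hz h)
    have hne : z - t ≠ t := fun h => htt (sub_eq_iff_eq_add.1 h).symm
    obtain ⟨M', rfl⟩ : ∃ M', M = t ::ₘ (z - t) ::ₘ M' := by
      have h1 : t ∈ M := Multiset.count_pos.1 (lt_min_iff.1 htM).1
      have h2 : z - t ∈ M.erase t :=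
        (Multiset.mem_erase_of_ne hne).2 (Multiset.count_pos.1 (lt_min_iff.1 htM).2)
      exact ⟨(M.erase t).erase (z - t), by rw [Multiset.cons_erase h2, Multiset.cons_erase h1]⟩
    rw [pairCount_cons_cons hz ht htt] at hM
    obtain ⟨P, hP, hPM⟩ := exists_pairs_of_two_mul_le_pairCount hz hL j M' (by omega)
    refine ⟨t ::ₘ P, by simp [hP], ?_⟩
    rw [Multiset.map_cons, Multiset.cons_add, Multiset.add_cons,
      Multiset.filter_cons_of_pos (p := (· ∉ L)) _ ht,
      Multiset.filter_cons_of_pos (p := (· ∉ L)) _ hzt]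
    exact Multiset.cons_le_cons _ (Multiset.cons_le_cons _ hPM)

end Pairing
theorem min_mul_min_le_card_subsetSums {G : Type*} [AddCommGroup G] [DecidableEq G] {p : ℕ}
    (hp : p.Prime) (hexp : ∀ x : G, p • x = 0) (L : AddSubgroup G) {B D : Multiset G}
    (hBL : ∀ x ∈ B, x ∈ L) (hB0 : (0 : G) ∉ B) (hDL : ∀ x ∈ D, x ∉ L) :
    min p (Multiset.card B + 1) * min p (Multiset.card D + 1) ≤ #(B + D).subsetSums := by
  classical
  set π := QuotientAddGroup.mk' L
  have hexpQ : ∀ x : G ⧸ L, p • x = 0 := by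
    intro x
    obtain ⟨x, rfl⟩ := QuotientAddGroup.mk'_surjective L x
    rw [← map_nsmul, hexp, map_zero]
  have hD0 : (0 : G ⧸ L) ∉ D.map π := fun h => by
    obtain ⟨d, hd, hd0⟩ := Multiset.mem_map.1 h
    exact hDL d hd ((QuotientAddGroup.eq_zero_iff d).1 hd0)
  have hB : min p (Multiset.card B + 1) ≤ #B.subsetSums :=
    Multiset.min_le_card_subsetSums (le_minOrder_of_nsmul_eq_zero hp hexp) hB0
  have hD : min p (Multiset.card D + 1) ≤ #(D.subsetSums.image π) := by
    simpa [← Multiset.subsetSums_map] using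
      Multiset.min_le_card_subsetSums (le_minOrder_of_nsmul_eq_zero hp hexpQ) hD0
  have hπB : ∀ x ∈ B.subsetSums, π x = 0 := fun x hx =>
    (QuotientAddGroup.eq_zero_iff x).2 (Multiset.coe_subsetSums_subset hBL hx)
  calc _ ≤ #B.subsetSums * #(D.subsetSums.image π) := Nat.mul_le_mul hB hD
    _ ≤ #(B.subsetSums + D.subsetSums) := card_mul_card_image_le_card_add π hπB
    _ = #(B + D).subsetSums := by rw [Multiset.subsetSums_add]

open Multiset in
open scoped Classical in
theorem stmt_12 (p : ℕ) (hp : p.Prime) [NeZero p]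
    (A : Multiset (ZMod p × ZMod p)) (hA : ValidMS p A)
    (z : ZMod p × ZMod p) (hz : z ≠ 0) (j : ℕ)
    (hj : 2 * j ≤ ∑ t : ZMod p × ZMod p,
        if t ∈ AddSubgroup.zmultiples z then 0
        else min (A.count t) (A.count (z - t))) :
    (sumset A).ncard ≥
      min p (1 + j + inCount A (AddSubgroup.zmultiples z)) *
        min p (1 + Multiset.card A - 2 * j - inCount A (AddSubgroup.zmultiples z)) := by
  set L := AddSubgroup.zmultiples z
  have hexp : ∀ x : ZMod p × ZMod p, p • x = 0 := ZModModule.char_nsmul_eq_zero p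
  have hzL : z ∈ L := AddSubgroup.mem_zmultiples z
  obtain ⟨P, rfl, hP⟩ := exists_pairs_of_two_mul_le_pairCount hzL
    (fun t => mem_zmultiples_of_add_self_eq hp hexp hz) j A hj
  set D := A.filter (· ∉ L) - (P + P.map (z - ·))
  have hsplit : A.filter (· ∈ L) + (P + P.map (z - ·)) + D = A := by
    rw [add_assoc, add_tsub_cancel_of_le hP, filter_add_not]
  have hsub : (A.filter (· ∈ L) + replicate (card P) z + D).subsetSums ⊆ A.subsetSums := by
    conv_rhs => rw [← hsplit, subsetSums_add, subsetSums_add _ (P + _)]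
    rw [subsetSums_add, subsetSums_add]
    gcongr
    exact subsetSums_replicate_card_subset z P
  have hbound := min_mul_min_le_card_subsetSums hp hexp L
    (B := A.filter (· ∈ L) + replicate (card P) z) (D := D)
    (fun x hx => (Multiset.mem_add.1 hx).elim (fun h => (Multiset.mem_filter.1 h).2)
      (fun h => eq_of_mem_replicate h ▸ hzL))
    (by
      rw [Multiset.mem_add, not_or]
      exact ⟨fun h => hA.1 (Multiset.mem_filter.1 h).1, fun h => hz (eq_of_mem_replicate h).symm⟩)
    (fun x hx => (Multiset.mem_filter.1 (mem_of_le tsub_le_self hx)).2)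
  have hcard : card A = inCount A L + 2 * card P + card D := by
    conv_lhs => rw [← hsplit]
    rw [card_add, card_add, card_add, Multiset.card_map, inCount]
    ring
  rw [ge_iff_le, ← coe_subsetSums, Set.ncard_coe_finset]
  refine le_trans (le_of_eq ?_) (hbound.trans (card_le_card hsub))
  rw [card_add, card_replicate, hcard, inCount]
  congr 2 <;> omega
end

section
/- Let p be an odd prime, m ≥ 1, and let x_1, ..., x_m be a generating set (basis) of (Z/pZ)^m. Let B_m be the multiset consisting of p−1 copies of x_1 together with the elements x_j + a·x_1 for each 2 ≤ j ≤ m and 0 ≤ a ≤ p−1. Then B_m is a valid multiset of size mp − 1: 0 ∉ B_m, and for every 1 ≤ d ≤ m, every subgroup of (Z/pZ)^m isomorphic to (Z/pZ)^d contains fewer than dp elements of B_m counted with multiplicity. -/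
open Finset Module

section

open scoped Classical

theorem LinearIndependent.card_le_finrank_of_mem {K V ι : Type*} [DivisionRing K]
    [AddCommGroup V] [Module K V] {v : ι → V} (hv : LinearIndependent K v)
    {W : Submodule K V} [FiniteDimensional K W] {s : Finset ι} (hs : ∀ i ∈ s, v i ∈ W) :
    #s ≤ finrank K W := by
  rw [← Fintype.card_coe s, ← finrank_span_eq_card (hv.comp ((↑) : s → ι) Subtype.val_injective)]
  exact Submodule.finrank_mono (Submodule.span_le.2 (Set.range_subset_iff.2 fun i => hs i i.2))

lemma card_filter_add_smul_mem_le_one {K V : Type*} [DivisionRing K] [Fintype K]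
    [AddCommGroup V] [Module K V] {W : Submodule K V} {v : V} (hv : v ∉ W) (u : V) :
    #{c : K | u + c • v ∈ W} ≤ 1 := by
  refine Finset.card_le_one.2 fun c hc c' hc' => ?_
  simp only [mem_filter, mem_univ, true_and] at hc hc'
  by_contra hne
  have hdiff : (c - c') • v ∈ W := by
    simpa [sub_smul] using W.sub_mem hc hc'
  exact hv ((W.smul_mem_iff (sub_ne_zero.2 hne)).1 hdiff)

section InCount

variable {G : Type*} [AddCommGroup G] (H : AddSubgroup G)

lemma inCount_eq_countP (A : Multiset G) : inCount A H = A.countP (· ∈ H) :=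
  (Multiset.countP_eq_card_filter _ _).symm

lemma inCount_add (A B : Multiset G) : inCount (A + B) H = inCount A H + inCount B H := by
  simp only [inCount_eq_countP, Multiset.countP_add]

lemma inCount_sum {κ : Type*} (s : Finset κ) (f : κ → Multiset G) :
    inCount (∑ k ∈ s, f k) H = ∑ k ∈ s, inCount (f k) H := by
  simp only [inCount_eq_countP, ← Multiset.coe_countPAddMonoidHom, map_sum]

lemma inCount_replicate (n : ℕ) (v : G) :
    inCount (Multiset.replicate n v) H = if v ∈ H then n else 0 := by
  rw [inCount_eq_countP]
  split_ifs with hv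
  · exact (Multiset.countP_eq_card.2 fun x hx => by rwa [Multiset.eq_of_mem_replicate hx]).trans
      (Multiset.card_replicate n v)
  · exact Multiset.countP_eq_zero.2 fun x hx => by rwa [Multiset.eq_of_mem_replicate hx]

lemma inCount_singleton (v : G) : inCount {v} H = if v ∈ H then 1 else 0 :=
  inCount_replicate H 1 v

end InCount

section Shear

variable {K V ι : Type*} [Field K] [Fintype K] [AddCommGroup V] [Module K V]
  [Fintype ι] [DecidableEq ι]

/-- `B_m` with `x₁ = b i₀`; the coefficients `a ∈ {0, …, p - 1}` become `c : K`. -/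
noncomputable def shearMultiset (b : Basis ι K V) (i₀ : ι) : Multiset V :=
  Multiset.replicate (Fintype.card K - 1) (b i₀) +
    ∑ j ∈ univ.erase i₀, ∑ c : K, {b j + c • b i₀}

lemma card_shearMultiset (b : Basis ι K V) (i₀ : ι) :
    Multiset.card (shearMultiset b i₀) = Fintype.card ι * Fintype.card K - 1 := by
  have hι : 0 < Fintype.card ι := Fintype.card_pos_iff.2 ⟨i₀⟩
  have hK : 0 < Fintype.card K := Fintype.card_pos
  simp only [shearMultiset, Multiset.card_add, Multiset.card_replicate, Multiset.card_sum,
    Multiset.card_singleton, sum_const, card_univ, smul_eq_mul, mul_one,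
    card_erase_of_mem (mem_univ i₀)]
  obtain ⟨n, hn⟩ : ∃ n, Fintype.card ι = n + 1 := ⟨_, (Nat.succ_pred_eq_of_pos hι).symm⟩
  rw [hn, Nat.add_sub_cancel, add_one_mul]
  omega

lemma zero_notMem_shearMultiset (b : Basis ι K V) (i₀ : ι) : (0 : V) ∉ shearMultiset b i₀ := by
  simp only [shearMultiset, Multiset.mem_add, Multiset.mem_replicate, Multiset.mem_sum,
    Multiset.mem_singleton, not_or, not_and, not_exists]
  refine ⟨fun _ => (b.ne_zero i₀).symm, fun j hj c _ hc => ?_⟩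
  have := congr_arg (fun x => b.repr x j) hc
  simp [Ne.symm (ne_of_mem_erase hj)] at this

lemma inCount_shearMultiset (b : Basis ι K V) (i₀ : ι) (W : Submodule K V) :
    inCount (shearMultiset b i₀) W.toAddSubgroup =
      (if b i₀ ∈ W then Fintype.card K - 1 else 0) +
        ∑ j ∈ univ.erase i₀, #{c : K | b j + c • b i₀ ∈ W} := by
  simp only [shearMultiset, inCount_add, inCount_sum, inCount_replicate, inCount_singleton,
    Submodule.mem_toAddSubgroup, Finset.card_filter]

lemma inCount_shearMultiset_lt_of_mem (b : Basis ι K V) (i₀ : ι) {W : Submodule K V}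
    (h : b i₀ ∈ W) :
    inCount (shearMultiset b i₀) W.toAddSubgroup < finrank K W * Fintype.card K := by
  have hcount (j : ι) : #{c : K | b j + c • b i₀ ∈ W} = if b j ∈ W then Fintype.card K else 0 := by
    simp only [W.add_mem_iff_left (W.smul_mem _ h)]
    split_ifs <;> simp [*]
  rw [inCount_shearMultiset, if_pos h, sum_congr rfl fun j _ => hcount j, ← sum_filter,
    sum_const, smul_eq_mul]
  set S := {j ∈ univ.erase i₀ | b j ∈ W}
  have hS : #S + 1 ≤ finrank K W := by
    have hi₀ : i₀ ∉ S := by simp [S]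
    rw [← card_insert_of_notMem hi₀]
    have := Module.Finite.of_basis b
    refine b.linearIndependent.card_le_finrank_of_mem fun j hj => ?_
    rcases mem_insert.1 hj with rfl | hj
    · exact h
    · exact (mem_filter.1 hj).2
  have hK : 0 < Fintype.card K := Fintype.card_pos
  calc Fintype.card K - 1 + #S * Fintype.card K < (#S + 1) * Fintype.card K := by
        rw [add_one_mul]; omega
    _ ≤ finrank K W * Fintype.card K := Nat.mul_le_mul_right _ hS

lemma inCount_shearMultiset_le_of_notMem (b : Basis ι K V) (i₀ : ι) {W : Submodule K V}
    (h : b i₀ ∉ W) : inCount (shearMultiset b i₀) W.toAddSubgroup ≤ finrank K W := by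
  have := Module.Finite.of_basis b
  let f : V →ₗ[K] V := b.constr K fun i => if i = i₀ then 0 else b i
  have hf (j : ι) (hj : j ≠ i₀) (c : K) : f (b j + c • b i₀) = b j := by
    simp only [f, map_add, map_smul, Module.Basis.constr_basis, if_neg hj, if_true,
      smul_zero, add_zero]
  have hcount (j : ι) (hj : j ∈ univ.erase i₀) :
      #{c : K | b j + c • b i₀ ∈ W} ≤ if b j ∈ W.map f then 1 else 0 := by
    split_ifs with hjW
    · exact card_filter_add_smul_mem_le_one h _
    · refine (card_eq_zero.2 (filter_eq_empty_iff.2 fun c _ hc => hjW ?_)).le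
      exact hf j (ne_of_mem_erase hj) c ▸ Submodule.mem_map_of_mem hc
  rw [inCount_shearMultiset, if_neg h, zero_add]
  calc _ ≤ ∑ j ∈ univ.erase i₀, if b j ∈ W.map f then 1 else 0 := sum_le_sum hcount
    _ = #{j ∈ univ.erase i₀ | b j ∈ W.map f} := (card_filter _ _).symm
    _ ≤ finrank K (W.map f) :=
      b.linearIndependent.card_le_finrank_of_mem fun j hj => (mem_filter.1 hj).2
    _ ≤ finrank K W := Submodule.finrank_map_le f W

theorem inCount_shearMultiset_lt (b : Basis ι K V) (i₀ : ι) {W : Submodule K V}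
    (hW : 0 < finrank K W) :
    inCount (shearMultiset b i₀) W.toAddSubgroup < finrank K W * Fintype.card K := by
  by_cases h : b i₀ ∈ W
  · exact inCount_shearMultiset_lt_of_mem b i₀ h
  · calc _ ≤ finrank K W := inCount_shearMultiset_le_of_notMem b i₀ h
      _ < finrank K W * Fintype.card K := lt_mul_right hW Fintype.one_lt_card

end Shear

end

lemma Module.finrank_eq_of_natCard_eq_pow {K V : Type*} [Field K] [Finite K] [AddCommGroup V]
    [Module K V] [Module.Finite K V] {d : ℕ} (h : Nat.card V = Nat.card K ^ d) :
    finrank K V = d := by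
  rw [Module.natCard_eq_pow_finrank (K := K)] at h
  exact Nat.pow_right_injective Finite.one_lt_card h

lemma ZMod.sum_range_natCast {M : Type*} [AddCommMonoid M] (p : ℕ) [NeZero p] (f : ZMod p → M) :
    ∑ a ∈ range p, f a = ∑ c : ZMod p, f c :=
  sum_nbij' (↑) ZMod.val (by simp) (by simp [ZMod.val_lt])
    (fun _ ha => ZMod.val_cast_of_lt (mem_range.1 ha)) (fun c _ => ZMod.natCast_zmod_val c)
    (fun _ _ => rfl)

theorem stmt_15_general (p : ℕ) (hp : p.Prime) (m : ℕ) (hm : 0 < m)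
    (b : Module.Basis (Fin m) (ZMod p) (Fin m → ZMod p))
    (Bm : Multiset (Fin m → ZMod p))
    (hBm : Bm = Multiset.replicate (p - 1) (b ⟨0, hm⟩) +
        ∑ j ∈ Finset.univ.erase (⟨0, hm⟩ : Fin m), ∑ a ∈ Finset.range p,
          ({b j + a • b ⟨0, hm⟩} : Multiset (Fin m → ZMod p))) :
    Multiset.card Bm = m * p - 1 ∧ (0 : Fin m → ZMod p) ∉ Bm ∧
      ∀ d : ℕ, 1 ≤ d → d ≤ m → ∀ H : AddSubgroup (Fin m → ZMod p),
        Nonempty (H ≃+ (Fin d → ZMod p)) → inCount Bm H < d * p := by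
  have : Fact p.Prime := ⟨hp⟩
  have hBm' : Bm = shearMultiset b ⟨0, hm⟩ := by
    rw [hBm, shearMultiset, ZMod.card]
    refine congrArg _ (sum_congr rfl fun j _ => ?_)
    simp only [← ZMod.sum_range_natCast p, Nat.cast_smul_eq_nsmul]
  subst hBm'
  refine ⟨by simp [card_shearMultiset, ZMod.card], zero_notMem_shearMultiset b _, ?_⟩
  rintro d hd - H ⟨φ⟩
  have hW : finrank (ZMod p) (AddSubgroup.toZModSubmodule p H) = d :=
    Module.finrank_eq_of_natCard_eq_pow (by simpa using Nat.card_congr φ.toEquiv)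
  have := inCount_shearMultiset_lt b ⟨0, hm⟩ (hW.symm ▸ hd)
  rwa [hW, ZMod.card, AddSubgroup.toZModSubmodule_toAddSubgroup] at this

theorem stmt_15 (p : ℕ) (hp : p.Prime) (hodd : Odd p) (m : ℕ) (hm : 0 < m)
    (b : Module.Basis (Fin m) (ZMod p) (Fin m → ZMod p))
    (Bm : Multiset (Fin m → ZMod p))
    (hBm : Bm = Multiset.replicate (p - 1) (b ⟨0, hm⟩) +
        ∑ j ∈ Finset.univ.erase (⟨0, hm⟩ : Fin m), ∑ a ∈ Finset.range p,
          ({b j + a • b ⟨0, hm⟩} : Multiset (Fin m → ZMod p))) :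
    Multiset.card Bm = m * p - 1 ∧ (0 : Fin m → ZMod p) ∉ Bm ∧
      ∀ d : ℕ, 1 ≤ d → d ≤ m → ∀ H : AddSubgroup (Fin m → ZMod p),
        Nonempty (H ≃+ (Fin d → ZMod p)) → inCount Bm H < d * p :=
  stmt_15_general p hp m hm b Bm hBm
end
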